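/- arXiv:2208.13924 — 9 statements merged into one kernel-verified Lean document; each statement's English description precedes it below -/
import Mathlib

section
/- For every natural number m with m ≥ 4, there is no strict clique decomposition L of Fin m in which every point has multiplicity exactly 2. That is, if L : Finset (Finset (Fin m)) satisfies: every l ∈ L has 2 ≤ l.card ≤ m − 1, and for every pair of distinct points p, q : Fin m there is exactly one l ∈ L with p ∈ l and q ∈ l, and moreover r v = 2 for all v : Fin m, then False. (This is the combinatorial core of Theorem 3.2: for n = m + 1 ≥ 5, the monodromy T_{b_1}⋯T_{b_n} on the n-holed sphere admits no factorization into positive Dehn twists over non-boundary-parallel curves.) -/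
/-- Combinatorial core of Theorem 3.2: for `m ≥ 4` there is no strict clique
decomposition of `Fin m` in which every point has multiplicity exactly `2`. -/
theorem no_clique_decomposition_all_mult_two (m : ℕ) (hm : 4 ≤ m)
    (L : Finset (Finset (Fin m)))
    (hcard : ∀ l ∈ L, 2 ≤ l.card ∧ l.card ≤ m - 1)
    (hpair : ∀ p q : Fin m, p ≠ q → ∃! l : Finset (Fin m), l ∈ L ∧ p ∈ l ∧ q ∈ l)
    (hmult : ∀ v : Fin m, (L.filter (fun l => v ∈ l)).card = 2) :
    False := by
  classical
  -- two distinct blocks meet in at most one point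
  have hmeet : ∀ {a b : Finset (Fin m)}, a ∈ L → b ∈ L → ∀ {x y : Fin m},
      x ∈ a → y ∈ a → x ∈ b → y ∈ b → x ≠ y → a = b := by
    intro a b ha hb x y hxa hya hxb hyb hxy
    obtain ⟨l, _, hl⟩ := hpair x y hxy
    exact (hl a ⟨ha, hxa, hya⟩).trans (hl b ⟨hb, hxb, hyb⟩).symm
  -- no point is in three distinct blocks
  have three : ∀ (x : Fin m) (a b c : Finset (Fin m)), a ∈ L → b ∈ L → c ∈ L →
      x ∈ a → x ∈ b → x ∈ c → a ≠ b → a ≠ c → b ≠ c → False := by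
    intro x a b c ha hb hc hxa hxb hxc hab hac hbc
    have hsub : ({a, b, c} : Finset (Finset (Fin m))) ⊆ L.filter (fun l => x ∈ l) := by
      intro l hl
      simp only [Finset.mem_insert, Finset.mem_singleton] at hl
      rcases hl with rfl | rfl | rfl <;> simp [Finset.mem_filter, ha, hb, hc, hxa, hxb, hxc]
    have h3 : ({a, b, c} : Finset (Finset (Fin m))).card = 3 := by
      rw [Finset.card_insert_of_notMem (by simp [hab, hac]),
        Finset.card_insert_of_notMem (by simp [hbc]), Finset.card_singleton]
    have := Finset.card_le_card hsub
    rw [h3, hmult] at this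
    omega
  have hm0 : 0 < m := by omega
  set v : Fin m := ⟨0, hm0⟩ with hv
  obtain ⟨l1, l2, h12, hf⟩ := Finset.card_eq_two.mp (hmult v)
  have hl1f : l1 ∈ L.filter (fun l => v ∈ l) := by rw [hf]; simp
  have hl2f : l2 ∈ L.filter (fun l => v ∈ l) := by rw [hf]; simp
  rw [Finset.mem_filter] at hl1f hl2f
  obtain ⟨hl1L, hvl1⟩ := hl1f
  obtain ⟨hl2L, hvl2⟩ := hl2f
  -- every point other than v lies in l1 or l2
  have key : ∀ w : Fin m, w ≠ v → w ∈ l1 ∨ w ∈ l2 := by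
    intro w hw
    obtain ⟨l, ⟨hlL, hvl, hwl⟩, _⟩ := hpair v w (Ne.symm hw)
    have : l ∈ L.filter (fun l => v ∈ l) := Finset.mem_filter.mpr ⟨hlL, hvl⟩
    rw [hf] at this
    simp only [Finset.mem_insert, Finset.mem_singleton] at this
    rcases this with rfl | rfl
    · exact Or.inl hwl
    · exact Or.inr hwl
  -- pick p ∈ l1 \ l2 and q ∈ l2 \ l1
  have hlt : ∀ l ∈ L, l.card < (Finset.univ : Finset (Fin m)).card := by
    intro l hl
    rw [Finset.card_univ, Fintype.card_fin]
    have := (hcard l hl).2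
    omega
  have hne : ∀ l ∈ L, (Finset.univ \ l).Nonempty := by
    intro l hl
    rw [← Finset.card_pos, Finset.card_sdiff_of_subset (Finset.subset_univ _)]
    have := hlt l hl
    omega
  obtain ⟨p, hp⟩ := hne l2 hl2L
  obtain ⟨q, hq⟩ := hne l1 hl1L
  rw [Finset.mem_sdiff] at hp hq
  have hpl2 : p ∉ l2 := hp.2
  have hql1 : q ∉ l1 := hq.2
  have hpv : p ≠ v := fun h => hpl2 (h ▸ hvl2)
  have hqv : q ≠ v := fun h => hql1 (h ▸ hvl1)
  have hpl1 : p ∈ l1 := (key p hpv).resolve_right hpl2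
  have hql2 : q ∈ l2 := (key q hqv).resolve_left hql1
  have hpq : p ≠ q := fun h => hpl2 (h ▸ hql2)
  obtain ⟨l3, ⟨hl3L, hpl3, hql3⟩, -⟩ := hpair p q hpq
  have h13 : l1 ≠ l3 := fun h => hql1 (h ▸ hql3)
  have h23 : l2 ≠ l3 := fun h => hpl2 (h ▸ hpl3)
  -- every point is in {v, p, q}
  have hsub : (Finset.univ : Finset (Fin m)) ⊆ {v, p, q} := by
    intro w _
    simp only [Finset.mem_insert, Finset.mem_singleton]
    by_contra hw
    push_neg at hw
    obtain ⟨hwv, hwp, hwq⟩ := hw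
    rcases key w hwv with hwl1 | hwl2
    · -- w ∈ l1, w ≠ v, w ≠ p: block through w,q is a third block at q
      have hwl2 : w ∉ l2 := fun h => h12 (hmeet hl1L hl2L hwl1 hvl1 h hvl2 hwv)
      obtain ⟨l4, ⟨hl4L, hwl4, hql4⟩, -⟩ := hpair w q hwq
      have h24 : l2 ≠ l4 := fun h => hwl2 (h ▸ hwl4)
      have h34 : l3 ≠ l4 := by
        intro h
        subst h
        exact h13 (hmeet hl1L hl3L hwl1 hpl1 hwl4 hpl3 hwp)
      exact three q l2 l3 l4 hl2L hl3L hl4L hql2 hql3 hql4 h23 h24 h34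
    · -- w ∈ l2, w ≠ v, w ≠ q: block through w,p is a third block at p
      have hwl1 : w ∉ l1 := fun h => h12 (hmeet hl1L hl2L h hvl1 hwl2 hvl2 hwv)
      obtain ⟨l4, ⟨hl4L, hwl4, hpl4⟩, -⟩ := hpair w p hwp
      have h14 : l1 ≠ l4 := fun h => hwl1 (h ▸ hwl4)
      have h34 : l3 ≠ l4 := by
        intro h
        subst h
        exact h23 (hmeet hl2L hl3L hwl2 hql2 hwl4 hql3 hwq)
      exact three p l1 l3 l4 hl1L hl3L hl4L hpl1 hpl3 hpl4 h13 h14 h34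
  have := Finset.card_le_card hsub
  rw [Finset.card_univ, Fintype.card_fin] at this
  have h3 : ({v, p, q} : Finset (Fin m)).card ≤ 3 :=
    (Finset.card_insert_le _ _).trans (by have := Finset.card_insert_le p {q}; rw [Finset.card_singleton] at this; omega)
  omega
end

section
/- For all natural numbers k and m with 1 ≤ k and k + 3 ≤ m, there is no strict clique decomposition L of Fin m admitting a distinguished point v₀ : Fin m with multiplicity r v₀ = k + 1 while every other point v ≠ v₀ has multiplicity r v = 2. (This is the combinatorial core of Theorem 3.7: for n = m + 1 ≥ 5 and 0 < k < n − 3, the monodromy T_{b_1}⋯T_{b_i}^k⋯T_{b_n} admits no factorization into positive Dehn twists over non-boundary-parallel curves.) -/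
/-- Combinatorial core of Theorem 3.7: for `1 ≤ k` and `k + 3 ≤ m` there is no
strict clique decomposition of `Fin m` with a distinguished point of
multiplicity `k + 1` while every other point has multiplicity `2`. -/
theorem no_clique_decomposition_one_big_mult (k m : ℕ) (hk : 1 ≤ k) (hkm : k + 3 ≤ m)
    (L : Finset (Finset (Fin m)))
    (hcard : ∀ l ∈ L, 2 ≤ l.card ∧ l.card ≤ m - 1)
    (hpair : ∀ p q : Fin m, p ≠ q → ∃! l : Finset (Fin m), l ∈ L ∧ p ∈ l ∧ q ∈ l)
    (v₀ : Fin m)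
    (hv₀ : (L.filter (fun l => v₀ ∈ l)).card = k + 1)
    (hmult : ∀ v : Fin m, v ≠ v₀ → (L.filter (fun l => v ∈ l)).card = 2) :
    False := by
  classical
  have hm2 : 2 ≤ m := by omega
  have : Nontrivial (Fin m) := Fin.nontrivial_iff_two_le.mpr hm2
  obtain ⟨v, hv⟩ := exists_ne v₀
  -- uniqueness of the clique through a pair of distinct points
  have uniq : ∀ {p q : Fin m}, p ≠ q → ∀ {l l' : Finset (Fin m)}, l ∈ L → l' ∈ L →
      p ∈ l → q ∈ l → p ∈ l' → q ∈ l' → l = l' := by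
    intro p q hpq l l' hl hl' h1 h2 h3 h4
    obtain ⟨u, -, hu⟩ := hpair p q hpq
    rw [hu l ⟨hl, h1, h2⟩, hu l' ⟨hl', h3, h4⟩]
  have key : ∀ A B : Finset (Fin m), A ≠ B →
      L.filter (fun l => v ∈ l) = {A, B} → v₀ ∈ A → False := by
    intro A B hAB hfil hv0A
    have hAf : A ∈ L.filter (fun l => v ∈ l) := by rw [hfil]; simp
    have hBf : B ∈ L.filter (fun l => v ∈ l) := by rw [hfil]; simp
    have hAL : A ∈ L := (Finset.mem_filter.mp hAf).1
    have hBL : B ∈ L := (Finset.mem_filter.mp hBf).1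
    have hvA : v ∈ A := (Finset.mem_filter.mp hAf).2
    have hvB : v ∈ B := (Finset.mem_filter.mp hBf).2
    have hunion : ∀ u : Fin m, u ∈ A ∨ u ∈ B := by
      intro u
      by_cases hu : u = v
      · exact Or.inl (hu ▸ hvA)
      · obtain ⟨l, ⟨hlL, hul, hvl⟩, -⟩ := hpair u v hu
        have hlf : l ∈ L.filter (fun l => v ∈ l) := Finset.mem_filter.mpr ⟨hlL, hvl⟩
        rw [hfil] at hlf
        rcases Finset.mem_insert.mp hlf with h | h
        · exact Or.inl (h ▸ hul)
        · exact Or.inr ((Finset.mem_singleton.mp h) ▸ hul)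
    have hinter : ∀ u : Fin m, u ∈ A → u ∈ B → u = v := by
      intro u huA huB
      by_contra hu
      exact hAB (uniq hu hAL hBL huA hvA huB hvB)
    have hv0B : v₀ ∉ B := fun h => hv ((hinter v₀ hv0A h).symm)
    by_cases hw : ∃ w ∈ A, w ≠ v ∧ w ≠ v₀
    · -- Case 1: A has a point other than v, v₀
      obtain ⟨w, hwA, hwv, hwv0⟩ := hw
      have hwB : w ∉ B := fun h => hwv (hinter w hwA h)
      have hB1 : 1 < B.card := by have := (hcard B hBL).1; omega
      obtain ⟨x, hxB, hxv⟩ := Finset.exists_mem_ne hB1 v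
      have hxA : x ∉ A := fun h => hxv (hinter x h hxB)
      have hwx : w ≠ x := fun h => hxA (h ▸ hwA)
      obtain ⟨C, ⟨hCL, hwC, hxC⟩, -⟩ := hpair w x hwx
      have hCA : C ≠ A := fun h => hxA (h ▸ hxC)
      have hCB : C ≠ B := fun h => hwB (h ▸ hwC)
      have hxv0 : x ≠ v₀ := fun h => hv0B (h ▸ hxB)
      -- the two cliques of x are exactly B and C
      have hxfil : {B, C} = L.filter (fun l => x ∈ l) := by
        apply Finset.eq_of_subset_of_card_le
        · intro l hl
          rcases Finset.mem_insert.mp hl with h | h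
          · exact h ▸ Finset.mem_filter.mpr ⟨hBL, hxB⟩
          · exact (Finset.mem_singleton.mp h) ▸ Finset.mem_filter.mpr ⟨hCL, hxC⟩
        · rw [hmult x hxv0, Finset.card_pair hCB.symm]
      -- the clique through x and v₀ must be C, so v₀ ∈ C
      obtain ⟨E, ⟨hEL, hxE, hv0E⟩, -⟩ := hpair x v₀ hxv0
      have hEf : E ∈ ({B, C} : Finset (Finset (Fin m))) := by
        rw [hxfil]; exact Finset.mem_filter.mpr ⟨hEL, hxE⟩
      have hEC : E = C := by
        rcases Finset.mem_insert.mp hEf with h | h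
        · exact absurd (h ▸ hv0E) hv0B
        · exact Finset.mem_singleton.mp h
      have hv0C : v₀ ∈ C := hEC ▸ hv0E
      -- now the pair {w, v₀} lies in both A and C, contradiction
      exact hCA (uniq hwv0 hCL hAL hwC hv0C hwA hv0A)
    · -- Case 2: A = {v, v₀}
      push_neg at hw
      -- everything except v₀ lies in B
      have hBsub : Finset.univ.erase v₀ ⊆ B := by
        intro u hu
        have huv0 : u ≠ v₀ := (Finset.mem_erase.mp hu).1
        rcases hunion u with h | h
        · rcases (em (u = v)) with h' | h'
          · exact h' ▸ hvB
          · exact absurd (hw u h h') huv0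
        · exact h
      have hBcard : m - 1 ≤ B.card := by
        have h1 : (Finset.univ.erase v₀).card = m - 1 := by
          rw [Finset.card_erase_of_mem (Finset.mem_univ v₀), Finset.card_univ, Fintype.card_fin]
        exact h1 ▸ Finset.card_le_card hBsub
      set F := L.filter (fun l => v₀ ∈ l) with hF
      have hAF : A ∈ F := Finset.mem_filter.mpr ⟨hAL, hv0A⟩
      -- each x ∈ B.erase v lies in some member of F other than A
      have hex : ∀ x ∈ B.erase v, ∃ E ∈ F.erase A, x ∈ E := by
        intro x hx
        have hxv : x ≠ v := (Finset.mem_erase.mp hx).1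
        have hxB : x ∈ B := (Finset.mem_erase.mp hx).2
        have hxv0 : x ≠ v₀ := fun h => hv0B (h ▸ hxB)
        obtain ⟨E, ⟨hEL, hxE, hv0E⟩, -⟩ := hpair x v₀ hxv0
        have hxA : x ∉ A := by
          intro hxA
          rcases hw x hxA hxv with h
          exact hxv0 h
        have hEA : E ≠ A := fun h => hxA (h ▸ hxE)
        exact ⟨E, Finset.mem_erase.mpr ⟨hEA, Finset.mem_filter.mpr ⟨hEL, hv0E⟩⟩, hxE⟩
      -- choice function
      have hcount : (B.erase v).card ≤ (F.erase A).card := by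
        apply Finset.card_le_card_of_injOn
          (fun x => if h : ∃ E ∈ F.erase A, x ∈ E then h.choose else ∅)
        · intro x hx
          have h := hex x hx
          simp only [dif_pos h]
          exact h.choose_spec.1
        · intro x hx y hy hxy
          by_contra hne
          have hxex := hex x hx
          have hyex := hex y hy
          simp only [dif_pos hxex, dif_pos hyex] at hxy
          set E := hxex.choose with hEdef
          have hEx : x ∈ E := hxex.choose_spec.2
          have hEy : y ∈ E := hxy ▸ hyex.choose_spec.2
          have hEF : E ∈ F.erase A := hxex.choose_spec.1
          have hEL : E ∈ L := (Finset.mem_filter.mp (Finset.mem_erase.mp hEF).2).1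
          have hv0E : v₀ ∈ E := (Finset.mem_filter.mp (Finset.mem_erase.mp hEF).2).2
          have hxB : x ∈ B := (Finset.mem_erase.mp hx).2
          have hyB : y ∈ B := (Finset.mem_erase.mp hy).2
          have : E = B := uniq hne hEL hBL hEx hEy hxB hyB
          exact hv0B (this ▸ hv0E)
      have h1 : (B.erase v).card = B.card - 1 :=
        Finset.card_erase_of_mem ((Finset.mem_erase.mpr ⟨hv, Finset.mem_univ v⟩) |> hBsub)
      have h2 : (F.erase A).card = F.card - 1 := Finset.card_erase_of_mem hAF
      rw [h1, h2, hF, hv₀] at hcount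
      omega
  -- locate the two cliques through v
  obtain ⟨A, B, hAB, hfil⟩ := Finset.card_eq_two.mp (hmult v hv)
  have hAf : A ∈ L.filter (fun l => v ∈ l) := by rw [hfil]; simp
  have hv0mem : v₀ ∈ A ∨ v₀ ∈ B := by
    obtain ⟨l, ⟨hlL, hv0l, hvl⟩, -⟩ := hpair v₀ v (fun h => hv h.symm)
    have hlf : l ∈ L.filter (fun l => v ∈ l) := Finset.mem_filter.mpr ⟨hlL, hvl⟩
    rw [hfil] at hlf
    rcases Finset.mem_insert.mp hlf with h | h
    · exact Or.inl (h ▸ hv0l)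
    · exact Or.inr ((Finset.mem_singleton.mp h) ▸ hv0l)
  rcases hv0mem with h | h
  · exact key A B hAB hfil h
  · exact key B A hAB.symm (by rw [hfil, Finset.pair_comm]) h
end

section
/- For every natural number m with m ≥ 4 and every strict clique decomposition L of Fin m, the total multiplicity satisfies ∑_{v : Fin m} r v ≥ 3m − 3 (equivalently, 1 + ∑_{v : Fin m} (r v − 1) ≥ 2(m + 1) − 4). (This is the combinatorial core of Theorem 3.9: for n = m + 1 ≥ 5, if the exponents a_1,…,a_{n−1} satisfy 1 + a_1 + ⋯ + a_{n−1} ≤ 2n − 5, then T_{b_1}^{a_1}⋯T_{b_{n-1}}^{a_{n-1}}T_{b_n} admits no factorization into positive Dehn twists over non-boundary-parallel curves.) -/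
/-- Combinatorial core of Theorem 3.9: for `m ≥ 4`, any strict clique
decomposition of `Fin m` has total multiplicity at least `3 * m - 3`. -/
theorem clique_decomposition_total_mult_lower_bound (m : ℕ) (hm : 4 ≤ m)
    (L : Finset (Finset (Fin m)))
    (hcard : ∀ l ∈ L, 2 ≤ l.card ∧ l.card ≤ m - 1)
    (hpair : ∀ p q : Fin m, p ≠ q → ∃! l : Finset (Fin m), l ∈ L ∧ p ∈ l ∧ q ∈ l) :
    3 * m - 3 ≤ ∑ v : Fin m, (L.filter (fun l => v ∈ l)).card := by
  have hm0 : 0 < m := by omega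
  haveI : Nontrivial (Fin m) := ⟨⟨⟨0, by omega⟩, ⟨1, by omega⟩, by simp [Fin.ext_iff]⟩⟩
  choose f hf using hpair
  have hfL : ∀ p q (h : p ≠ q), f p q h ∈ L := fun p q h => (hf p q h).1.1
  have hfp : ∀ p q (h : p ≠ q), p ∈ f p q h := fun p q h => (hf p q h).1.2.1
  have hfq : ∀ p q (h : p ≠ q), q ∈ f p q h := fun p q h => (hf p q h).1.2.2
  have hfu : ∀ p q (h : p ≠ q) l, l ∈ L → p ∈ l → q ∈ l → l = f p q h :=
    fun p q h l hl hp hq => (hf p q h).2 l ⟨hl, hp, hq⟩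
  -- every line misses some point
  have hproper : ∀ l ∈ L, ∃ w : Fin m, w ∉ l := by
    intro l hl
    by_contra h
    push_neg at h
    have he : l = Finset.univ := Finset.eq_univ_iff_forall.mpr h
    have hle := (hcard l hl).2
    rw [he, Finset.card_univ, Fintype.card_fin] at hle
    omega
  -- each point lies on at least 2 lines
  have hr2 : ∀ v : Fin m, 2 ≤ (L.filter (fun l => v ∈ l)).card := by
    intro v
    obtain ⟨q, hq⟩ := exists_ne v
    have hvq : v ≠ q := hq.symm
    obtain ⟨w, hw⟩ := hproper (f v q hvq) (hfL v q hvq)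
    have hvw : v ≠ w := fun e => hw (e ▸ hfp v q hvq)
    refine Finset.one_lt_card.mpr ⟨f v q hvq, ?_, f v w hvw, ?_, ?_⟩
    · exact Finset.mem_filter.mpr ⟨hfL v q hvq, hfp v q hvq⟩
    · exact Finset.mem_filter.mpr ⟨hfL v w hvw, hfp v w hvw⟩
    · intro he
      exact hw (he ▸ hfq v w hvw)
  -- a point off a line l0 lies on at least |l0| lines
  have hrA : ∀ (l0 : Finset (Fin m)), l0 ∈ L → ∀ v : Fin m, v ∉ l0 →
      l0.card ≤ (L.filter (fun l => v ∈ l)).card := by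
    intro l0 hl0 v hv
    apply Finset.card_le_card_of_injOn (fun p => if h : v = p then ∅ else f v p h)
    · intro p hp
      have hne : v ≠ p := fun e => hv (e ▸ hp)
      simp only [dif_neg hne]
      exact Finset.mem_filter.mpr ⟨hfL v p hne, hfp v p hne⟩
    · intro p hp q hq hpq
      have hnep : v ≠ p := fun e => hv (e ▸ hp)
      have hneq : v ≠ q := fun e => hv (e ▸ hq)
      simp only [dif_neg hnep, dif_neg hneq] at hpq
      by_contra hne
      have h1 : l0 = f p q hne := hfu p q hne l0 hl0 hp hq
      have h2 : f v p hnep = f p q hne :=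
        hfu p q hne _ (hfL v p hnep) (hfq v p hnep) (by rw [hpq]; exact hfq v q hneq)
      exact hv (by rw [h1, ← h2]; exact hfp v p hnep)
  by_cases hbig : ∃ l0 ∈ L, 3 ≤ l0.card
  · -- some line of size ≥ 3
    obtain ⟨l0, hl0, hk3⟩ := hbig
    set k := l0.card with hkdef
    have hkm : k ≤ m - 1 := (hcard l0 hl0).2
    have hsum : k * 2 + (m - k) * k ≤ ∑ v : Fin m, (L.filter (fun l => v ∈ l)).card := by
      rw [← Finset.sum_add_sum_compl l0]
      have h1 : l0.card • 2 ≤ ∑ v ∈ l0, (L.filter (fun l => v ∈ l)).card :=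
        Finset.card_nsmul_le_sum l0 _ 2 (fun v _ => hr2 v)
      have h2 : l0ᶜ.card • k ≤ ∑ v ∈ l0ᶜ, (L.filter (fun l => v ∈ l)).card :=
        Finset.card_nsmul_le_sum l0ᶜ _ k
          (fun v hv => hrA l0 hl0 v (Finset.mem_compl.mp hv))
      have hc : l0ᶜ.card = m - k := by
        rw [Finset.card_compl, Fintype.card_fin]
      simp only [smul_eq_mul, hc] at h1 h2
      omega
    have key : 3 * m ≤ k * 2 + (m - k) * k + 3 := by
      have hkm' : k ≤ m := by omega
      zify [hkm']
      nlinarith [mul_nonneg (by linarith : (0:ℤ) ≤ (k:ℤ) - 3)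
        (by omega : (0:ℤ) ≤ (m:ℤ) - 1 - (k:ℤ))]
    omega
  · -- all lines have size exactly 2
    push_neg at hbig
    have hrM : ∀ v : Fin m, m - 1 ≤ (L.filter (fun l => v ∈ l)).card := by
      intro v
      have hcardU : (Finset.univ.erase v).card = m - 1 := by
        rw [Finset.card_erase_of_mem (Finset.mem_univ v), Finset.card_univ, Fintype.card_fin]
      rw [← hcardU]
      apply Finset.card_le_card_of_injOn (fun q => if h : v = q then ∅ else f v q h)
      · intro q hq
        have hne : v ≠ q := fun e => (Finset.mem_erase.mp hq).1 e.symm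
        simp only [dif_neg hne]
        exact Finset.mem_filter.mpr ⟨hfL v q hne, hfp v q hne⟩
      · intro p hp q hq hpq
        have hnep : v ≠ p := fun e => (Finset.mem_erase.mp hp).1 e.symm
        have hneq : v ≠ q := fun e => (Finset.mem_erase.mp hq).1 e.symm
        simp only [dif_neg hnep, dif_neg hneq] at hpq
        -- the common line has card 2 and contains v, p, q with p,q ≠ v
        have hl2 : (f v p hnep).card = 2 := by
          have := (hcard _ (hfL v p hnep)).1
          have := hbig _ (hfL v p hnep)
          omega
        have hpe : p ∈ (f v p hnep).erase v :=
          Finset.mem_erase.mpr ⟨fun e => hnep e.symm, hfq v p hnep⟩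
        have hqe : q ∈ (f v p hnep).erase v := by
          refine Finset.mem_erase.mpr ⟨fun e => hneq e.symm, ?_⟩
          rw [hpq]; exact hfq v q hneq
        have hce : ((f v p hnep).erase v).card = 1 := by
          rw [Finset.card_erase_of_mem (hfp v p hnep), hl2]
        obtain ⟨a, ha⟩ := Finset.card_eq_one.mp hce
        rw [ha, Finset.mem_singleton] at hpe hqe
        rw [hpe, hqe]
    have hsum : m * (m - 1) ≤ ∑ v : Fin m, (L.filter (fun l => v ∈ l)).card := by
      calc m * (m - 1) = ∑ _v : Fin m, (m - 1) := by
            rw [Finset.sum_const, Finset.card_univ, Fintype.card_fin, smul_eq_mul]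
        _ ≤ _ := Finset.sum_le_sum (fun v _ => hrM v)
    have : 3 * m - 3 ≤ m * (m - 1) :=
      calc 3 * m - 3 ≤ 3 * (m - 1) := by omega
        _ ≤ m * (m - 1) := Nat.mul_le_mul_right _ (by omega)
    omega
end

section
/- For every natural number m with m ≥ 5 and every strict clique decomposition L of Fin m, there exists a point v : Fin m with multiplicity r v ≥ 3. (This is the claim established in the inductive step of the proof of Theorem 3.9: in any partition of the edge set of the complete graph K_m into strict complete subgraphs, at least one vertex is incident to edges of at least three distinct colors.) -/
private lemma aux_clique_mult (m : ℕ) (L : Finset (Finset (Fin m)))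
    (hpair : ∀ p q : Fin m, p ≠ q → ∃! l : Finset (Fin m), l ∈ L ∧ p ∈ l ∧ q ∈ l)
    (hr : ∀ w : Fin m, (L.filter (fun l => w ∈ l)).card ≤ 2)
    (v : Fin m) (A B : Finset (Fin m)) (hAL : A ∈ L) (hBL : B ∈ L)
    (hvA : v ∈ A) (hvB : v ∈ B) (hAB : A ≠ B)
    (hint : ∀ x, x ∈ A → x ∈ B → x = v)
    (h2 : 2 ≤ (A.erase v).card) (h1 : (B.erase v).Nonempty) : False := by
  obtain ⟨w, hw⟩ := h1
  have hwv : w ≠ v := Finset.ne_of_mem_erase hw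
  have hwB : w ∈ B := Finset.mem_of_mem_erase hw
  have hwA : w ∉ A := fun h => hwv (hint w h hwB)
  obtain ⟨a, ha, a', ha', haa'⟩ := Finset.one_lt_card.mp h2
  have haA : a ∈ A := Finset.mem_of_mem_erase ha
  have ha'A : a' ∈ A := Finset.mem_of_mem_erase ha'
  have haB : a ∉ B := fun h => (Finset.ne_of_mem_erase ha) (hint a haA h)
  have ha'B : a' ∉ B := fun h => (Finset.ne_of_mem_erase ha') (hint a' ha'A h)
  obtain ⟨C, ⟨hCL, hwC, haC⟩, _⟩ := hpair w a (by rintro rfl; exact hwA haA)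
  obtain ⟨C', ⟨hC'L, hwC', ha'C'⟩, _⟩ := hpair w a' (by rintro rfl; exact hwA ha'A)
  have hCB : C ≠ B := fun h => haB (h ▸ haC)
  have hC'B : C' ≠ B := fun h => ha'B (h ▸ ha'C')
  have hCC' : C = C' := by
    by_contra hne
    have h3 : 2 < (L.filter (fun l => w ∈ l)).card := by
      refine Finset.two_lt_card.mpr ⟨B, ?_, C, ?_, C', ?_, hCB.symm, hC'B.symm, hne⟩ <;>
        simp [Finset.mem_filter, hBL, hCL, hC'L, hwB, hwC, hwC']
    exact absurd (hr w) (by omega)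
  have hAC : A = C := by
    obtain ⟨l, _, hu⟩ := hpair a a' haa'
    rw [hu A ⟨hAL, haA, ha'A⟩, hu C ⟨hCL, haC, hCC' ▸ ha'C'⟩]
  exact hwA (hAC ▸ hwC)

/-- Inductive step of the proof of Theorem 3.9: for `m ≥ 5`, any strict clique
decomposition of `Fin m` has a point of multiplicity at least `3`. -/
theorem clique_decomposition_exists_mult_three (m : ℕ) (hm : 5 ≤ m)
    (L : Finset (Finset (Fin m)))
    (hcard : ∀ l ∈ L, 2 ≤ l.card ∧ l.card ≤ m - 1)
    (hpair : ∀ p q : Fin m, p ≠ q → ∃! l : Finset (Fin m), l ∈ L ∧ p ∈ l ∧ q ∈ l) :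
    ∃ v : Fin m, 3 ≤ (L.filter (fun l => v ∈ l)).card := by
  by_contra h
  push_neg at h
  have hr : ∀ w : Fin m, (L.filter (fun l => w ∈ l)).card ≤ 2 := fun w => by
    have := h w; omega
  set v : Fin m := ⟨0, by omega⟩ with hv
  set p : Fin m := ⟨1, by omega⟩ with hp
  have hvp : v ≠ p := by simp [hv, hp, Fin.ext_iff]
  obtain ⟨A, ⟨hAL, hvA, hpA⟩, _⟩ := hpair v p hvp
  have hAm : A.card ≤ m - 1 := (hcard A hAL).2
  have hx : ∃ x, x ∉ A := by
    by_contra hx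
    push_neg at hx
    have hsub : (Finset.univ : Finset (Fin m)) ⊆ A := fun y _ => hx y
    have := Finset.card_le_card hsub
    simp [Finset.card_univ] at this
    omega
  obtain ⟨x, hxA⟩ := hx
  have hvx : v ≠ x := by rintro rfl; exact hxA hvA
  obtain ⟨B, ⟨hBL, hvB, hxB⟩, _⟩ := hpair v x hvx
  have hAB : A ≠ B := by rintro rfl; exact hxA hxB
  have hint : ∀ y, y ∈ A → y ∈ B → y = v := by
    intro y hyA hyB
    by_contra hyv
    obtain ⟨l, _, hu⟩ := hpair v y (Ne.symm hyv)
    exact hAB ((hu A ⟨hAL, hvA, hyA⟩).trans (hu B ⟨hBL, hvB, hyB⟩).symm)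
  -- every point ≠ v lies in A ∪ B
  have hcov : ∀ y : Fin m, y ≠ v → y ∈ A ∪ B := by
    intro y hyv
    by_contra hy
    simp only [Finset.mem_union, not_or] at hy
    obtain ⟨l, ⟨hlL, hvl, hyl⟩, _⟩ := hpair v y (Ne.symm hyv)
    have hlA : l ≠ A := fun h => hy.1 (h ▸ hyl)
    have hlB : l ≠ B := fun h => hy.2 (h ▸ hyl)
    have h3 : 2 < (L.filter (fun l => v ∈ l)).card := by
      refine Finset.two_lt_card.mpr ⟨A, ?_, B, ?_, l, ?_, hAB, hlA.symm, hlB.symm⟩ <;>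
        simp [Finset.mem_filter, hAL, hBL, hlL, hvA, hvB, hvl]
    exact absurd (hr v) (by omega)
  have hsub : (Finset.univ : Finset (Fin m)).erase v ⊆ A.erase v ∪ B.erase v := by
    intro y hy
    have hyv : y ≠ v := Finset.ne_of_mem_erase hy
    rcases Finset.mem_union.mp (hcov y hyv) with h' | h'
    · exact Finset.mem_union_left _ (Finset.mem_erase.mpr ⟨hyv, h'⟩)
    · exact Finset.mem_union_right _ (Finset.mem_erase.mpr ⟨hyv, h'⟩)
  have hcount : m - 1 ≤ (A.erase v).card + (B.erase v).card := by
    have h1 := Finset.card_le_card hsub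
    have h2 := Finset.card_union_le (A.erase v) (B.erase v)
    rw [Finset.card_erase_of_mem (Finset.mem_univ v), Finset.card_univ, Fintype.card_fin] at h1
    omega
  have hAe : 1 ≤ (A.erase v).card := by
    rw [Finset.card_erase_of_mem hvA]
    have := (hcard A hAL).1; omega
  have hBe : 1 ≤ (B.erase v).card := by
    rw [Finset.card_erase_of_mem hvB]
    have := (hcard B hBL).1; omega
  rcases le_or_gt 2 (A.erase v).card with h2 | h2
  · exact aux_clique_mult m L hpair hr v A B hAL hBL hvA hvB hAB hint h2
      (Finset.card_pos.mp (by omega))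
  · refine aux_clique_mult m L hpair hr v B A hBL hAL hvB hvA hAB.symm
      (fun y h1 h2 => hint y h2 h1) (by omega) (Finset.card_pos.mp (by omega))
end

section
/- Let m be a natural number, let L be a strict clique decomposition of Fin m, let l ∈ L with l.card ≥ 3, and let q : Fin m with q ∉ l. Then r q ≥ 3. (This is the key step used repeatedly in the proofs of Theorems 3.2, 3.7, and 3.9: if some color class of the edge coloring of K_m spans at least three vertices, then every vertex outside that class is incident to edges of at least three distinct colors, since the edges joining it to three vertices of the class must all receive distinct colors.) -/
/-- Key step in Theorems 3.2, 3.7, 3.9: if a member of a strict clique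
decomposition of `Fin m` has at least three points, then any point outside it
has multiplicity at least `3`. -/
theorem clique_decomposition_outside_big_clique (m : ℕ)
    (L : Finset (Finset (Fin m)))
    (hcard : ∀ l ∈ L, 2 ≤ l.card ∧ l.card ≤ m - 1)
    (hpair : ∀ p q : Fin m, p ≠ q → ∃! l : Finset (Fin m), l ∈ L ∧ p ∈ l ∧ q ∈ l)
    (l : Finset (Fin m)) (hl : l ∈ L) (hl3 : 3 ≤ l.card)
    (q : Fin m) (hq : q ∉ l) :
    3 ≤ (L.filter (fun s => q ∈ s)).card := by
  have hpq : ∀ p ∈ l, p ≠ q := by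
    intro p hp h; exact hq (h ▸ hp)
  -- for each p ∈ l, choose the unique member containing p and q
  have key : ∀ p ∈ l, ∃ s, s ∈ L ∧ p ∈ s ∧ q ∈ s := by
    intro p hp
    obtain ⟨s, hs, _⟩ := hpair p q (hpq p hp)
    exact ⟨s, hs⟩
  choose! f hf using key
  have hmaps : ∀ p ∈ l, f p ∈ L.filter (fun s => q ∈ s) := by
    intro p hp
    obtain ⟨h1, h2, h3⟩ := hf p hp
    simp [Finset.mem_filter, h1, h3]
  have hinj : Set.InjOn f l := by
    intro p hp p' hp' heq
    by_contra hne
    obtain ⟨h1, h2, h3⟩ := hf p hp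
    obtain ⟨h1', h2', h3'⟩ := hf p' hp'
    obtain ⟨s, _, huniq⟩ := hpair p p' hne
    have e1 : f p = s := huniq (f p) ⟨h1, h2, heq ▸ h2'⟩
    have e2 : l = s := huniq l ⟨hl, hp, hp'⟩
    exact hq (e2 ▸ e1 ▸ h3)
  calc 3 ≤ l.card := hl3
    _ ≤ (L.filter (fun s => q ∈ s)).card := Finset.card_le_card_of_injOn f hmaps hinj
end

section
/- For every natural number m with m ≥ 4: (a) every strict clique decomposition L of Fin m satisfies ∑_{v : Fin m} r v ≤ m·(m − 1); and (b) the family of all 2-element subsets of Fin m is a strict clique decomposition of Fin m attaining equality, with r v = m − 1 for every v : Fin m. (This is the claim from Section 5 identifying the maximal total multiplicity, hence the maximal Euler characteristic n² − 5n + 6 among plumbings arising from relations of the specified form, where n = m + 1.) -/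
lemma pair_filter_card (m : ℕ) (hm : 1 ≤ m) (v : Fin m) :
    (((Finset.univ : Finset (Fin m)).powersetCard 2).filter (fun l => v ∈ l)).card
      = m - 1 := by
  have hne : ∀ l ∈ ((Finset.univ : Finset (Fin m)).powersetCard 2).filter (fun l => v ∈ l),
      (l.erase v).Nonempty := by
    intro l hl
    simp only [Finset.mem_filter, Finset.mem_powersetCard] at hl
    apply Finset.card_pos.mp
    rw [Finset.card_erase_of_mem hl.2, hl.1.2]
    norm_num
  have key : (((Finset.univ : Finset (Fin m)).powersetCard 2).filter (fun l => v ∈ l)).card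
      = ((Finset.univ : Finset (Fin m)).erase v).card := by
    refine Finset.card_bij'
      (fun l hl => (l.erase v).min' (hne l hl))
      (fun q _ => ({v, q} : Finset (Fin m))) ?hi ?hj ?li ?ri
    case hi =>
      intro l hl
      have h := (l.erase v).min'_mem (hne l hl)
      simp only [Finset.mem_erase] at h
      simp [h.1]
    case hj =>
      intro q hq
      simp only [Finset.mem_erase] at hq
      simp only [Finset.mem_filter, Finset.mem_powersetCard]
      exact ⟨⟨Finset.subset_univ _, Finset.card_pair (Ne.symm hq.1)⟩, by simp⟩
    case li =>
      intro l hl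
      have hmem := (l.erase v).min'_mem (hne l hl)
      simp only [Finset.mem_filter, Finset.mem_powersetCard] at hl
      simp only [Finset.mem_erase] at hmem
      apply Finset.eq_of_subset_of_card_le
      · intro x hx
        simp only [Finset.mem_insert, Finset.mem_singleton] at hx
        rcases hx with rfl | rfl
        · exact hl.2
        · exact hmem.2
      · rw [hl.1.2, Finset.card_pair (Ne.symm hmem.1)]
    case ri =>
      intro q hq
      simp only [Finset.mem_erase] at hq
      have herase : ({v, q} : Finset (Fin m)).erase v = {q} := by
        rw [Finset.erase_insert]
        simp [Ne.symm hq.1]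
      simp [herase]
  rw [key, Finset.card_erase_of_mem (Finset.mem_univ v), Finset.card_univ, Fintype.card_fin]

/-- Maximal total multiplicity: (a) every strict clique decomposition of
`Fin m` (with `m ≥ 4`) has total multiplicity at most `m * (m - 1)`; and
(b) the family of all 2-element subsets of `Fin m` is a strict clique
decomposition attaining equality, every point having multiplicity `m - 1`. -/
theorem clique_decomposition_total_mult_upper_bound (m : ℕ) (hm : 4 ≤ m) :
    (∀ L : Finset (Finset (Fin m)),
      (∀ l ∈ L, 2 ≤ l.card ∧ l.card ≤ m - 1) →
      (∀ p q : Fin m, p ≠ q → ∃! l : Finset (Fin m), l ∈ L ∧ p ∈ l ∧ q ∈ l) →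
      ∑ v : Fin m, (L.filter (fun l => v ∈ l)).card ≤ m * (m - 1)) ∧
    ((∀ l ∈ (Finset.univ : Finset (Fin m)).powersetCard 2, 2 ≤ l.card ∧ l.card ≤ m - 1) ∧
      (∀ p q : Fin m, p ≠ q → ∃! l : Finset (Fin m),
        l ∈ (Finset.univ : Finset (Fin m)).powersetCard 2 ∧ p ∈ l ∧ q ∈ l) ∧
      (∑ v : Fin m,
        (((Finset.univ : Finset (Fin m)).powersetCard 2).filter (fun l => v ∈ l)).card
          = m * (m - 1)) ∧
      (∀ v : Fin m,
        (((Finset.univ : Finset (Fin m)).powersetCard 2).filter (fun l => v ∈ l)).card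
          = m - 1)) := by
  refine ⟨?_, ?_, ?_, ?_, ?_⟩
  · -- (a)
    intro L hs hu
    have hbound : ∀ v : Fin m, (L.filter (fun l => v ∈ l)).card ≤ m - 1 := by
      intro v
      have : (L.filter (fun l => v ∈ l)).card ≤ ((Finset.univ : Finset (Fin m)).erase v).card := by
        apply Finset.card_le_card_of_injOn (fun l => if h : (l.erase v).Nonempty then (l.erase v).min' h else v)
        · intro l hl
          simp only [Finset.mem_coe, Finset.mem_filter] at hl
          have hne : (l.erase v).Nonempty := by
            apply Finset.card_pos.mp
            rw [Finset.card_erase_of_mem hl.2]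
            have := (hs l hl.1).1
            omega
          simp only [dif_pos hne]
          have := (l.erase v).min'_mem hne
          simp only [Finset.mem_erase] at this
          simp [this.1]
        · intro l₁ h₁ l₂ h₂ heq
          simp only [Finset.coe_filter, Set.mem_setOf_eq] at h₁ h₂
          have hne₁ : (l₁.erase v).Nonempty := by
            apply Finset.card_pos.mp
            rw [Finset.card_erase_of_mem h₁.2]
            have := (hs l₁ h₁.1).1; omega
          have hne₂ : (l₂.erase v).Nonempty := by
            apply Finset.card_pos.mp
            rw [Finset.card_erase_of_mem h₂.2]
            have := (hs l₂ h₂.1).1; omega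
          simp only [dif_pos hne₁, dif_pos hne₂] at heq
          set q := (l₁.erase v).min' hne₁ with hq
          have hq₁ := (l₁.erase v).min'_mem hne₁
          have hq₂ := (l₂.erase v).min'_mem hne₂
          rw [← heq] at hq₂
          simp only [Finset.mem_erase] at hq₁ hq₂
          obtain ⟨l, -, hl⟩ := hu v q (Ne.symm hq₁.1)
          rw [hl l₁ ⟨h₁.1, h₁.2, hq₁.2⟩, hl l₂ ⟨h₂.1, h₂.2, hq₂.2⟩]
      rwa [Finset.card_erase_of_mem (Finset.mem_univ v), Finset.card_univ,
        Fintype.card_fin] at this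
    calc ∑ v : Fin m, (L.filter (fun l => v ∈ l)).card
        ≤ ∑ _v : Fin m, (m - 1) := Finset.sum_le_sum (fun v _ => hbound v)
      _ = m * (m - 1) := by simp [Finset.sum_const, Finset.card_univ]
  · intro l hl
    simp only [Finset.mem_powersetCard] at hl
    omega
  · intro p q hpq
    refine ⟨{p, q}, ⟨?_, by simp⟩, ?_⟩
    · simp [Finset.mem_powersetCard, Finset.card_pair hpq]
    · intro l ⟨hl, hp, hq⟩
      simp only [Finset.mem_powersetCard] at hl
      symm
      apply Finset.eq_of_subset_of_card_le
      · intro x hx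
        simp only [Finset.mem_insert, Finset.mem_singleton] at hx
        rcases hx with rfl | rfl <;> assumption
      · rw [hl.2, Finset.card_pair hpq]
  · rw [Finset.sum_congr rfl (fun v _ => pair_filter_card m (by omega) v)]
    simp [Finset.sum_const, Finset.card_univ]
  · exact fun v => pair_filter_card m (by omega) v
end

section
/- For every natural number m with m ≥ 4, there exists a strict clique decomposition L of Fin m with ∑_{v : Fin m} r v = 3m − 3: namely the near-pencil consisting of one member of cardinality m − 1 together with all 2-element sets joining the remaining point to each point of that member. (This is the claim from Section 5 that the lower bound of Theorem 3.9 is sharp: the minimal number 2n − 4 of boundary parallel Dehn twists occurring in a relation of the specified form is attained, where n = m + 1.) -/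
/-- Sharpness of the lower bound of Theorem 3.9: for `m ≥ 4` there exists a
strict clique decomposition of `Fin m` (the near-pencil) with total
multiplicity exactly `3 * m - 3`. -/
theorem clique_decomposition_total_mult_lower_bound_sharp (m : ℕ) (hm : 4 ≤ m) :
    ∃ L : Finset (Finset (Fin m)),
      (∀ l ∈ L, 2 ≤ l.card ∧ l.card ≤ m - 1) ∧
      (∀ p q : Fin m, p ≠ q → ∃! l : Finset (Fin m), l ∈ L ∧ p ∈ l ∧ q ∈ l) ∧
      ∑ v : Fin m, (L.filter (fun l => v ∈ l)).card = 3 * m - 3 := by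
  have hm0 : 0 < m := by omega
  set x₀ : Fin m := ⟨0, hm0⟩ with hx₀
  set B : Finset (Fin m) := Finset.univ.erase x₀ with hB
  have hBcard : B.card = m - 1 := by
    rw [hB, Finset.card_erase_of_mem (Finset.mem_univ _), Finset.card_univ, Fintype.card_fin]
  set L : Finset (Finset (Fin m)) := insert B (B.image (fun v => {x₀, v})) with hL
  have hpaircard : ∀ v ∈ B, ({x₀, v} : Finset (Fin m)).card = 2 := by
    intro v hv
    rw [Finset.card_insert_of_notMem, Finset.card_singleton]
    simp only [Finset.mem_singleton]
    exact fun h => (Finset.mem_erase.mp hv).1 h.symm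
  have hBnotimg : B ∉ B.image (fun v => {x₀, v}) := by
    intro h
    obtain ⟨v, hv, heq⟩ := Finset.mem_image.mp h
    have := hpaircard v hv
    rw [heq, hBcard] at this
    omega
  have hmemL : ∀ l, l ∈ L ↔ l = B ∨ ∃ v ∈ B, l = {x₀, v} := by
    intro l
    simp only [hL, Finset.mem_insert, Finset.mem_image]
    constructor
    · rintro (h | ⟨v, hv, h⟩)
      · exact Or.inl h
      · exact Or.inr ⟨v, hv, h.symm⟩
    · rintro (h | ⟨v, hv, h⟩)
      · exact Or.inl h
      · exact Or.inr ⟨v, hv, h.symm⟩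
  refine ⟨L, ?_, ?_, ?_⟩
  · intro l hl
    rcases (hmemL l).mp hl with h | ⟨v, hv, h⟩
    · rw [h, hBcard]; omega
    · rw [h, hpaircard v hv]; omega
  · intro p q hpq
    by_cases hp : p = x₀
    · subst hp
      have hqB : q ∈ B := Finset.mem_erase.mpr ⟨fun h => hpq h.symm, Finset.mem_univ _⟩
      refine ⟨{x₀, q}, ⟨(hmemL _).mpr (Or.inr ⟨q, hqB, rfl⟩), by simp, by simp⟩, ?_⟩
      rintro l ⟨hl, hpl, hql⟩
      rcases (hmemL l).mp hl with h | ⟨v, hv, h⟩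
      · exact absurd (h ▸ hpl) (by simp [hB])
      · subst h
        rcases Finset.mem_insert.mp hql with h | h
        · exact absurd h.symm hpq
        · obtain rfl := Finset.mem_singleton.mp h
          rfl
    · by_cases hq : q = x₀
      · subst hq
        have hpB : p ∈ B := Finset.mem_erase.mpr ⟨hp, Finset.mem_univ _⟩
        refine ⟨{x₀, p}, ⟨(hmemL _).mpr (Or.inr ⟨p, hpB, rfl⟩), by simp, by simp⟩, ?_⟩
        rintro l ⟨hl, hpl, hql⟩
        rcases (hmemL l).mp hl with h | ⟨v, hv, h⟩
        · exact absurd (h ▸ hql) (by simp [hB])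
        · subst h
          rcases Finset.mem_insert.mp hpl with h | h
          · exact absurd h hp
          · obtain rfl := Finset.mem_singleton.mp h
            rfl
      · have hpB : p ∈ B := Finset.mem_erase.mpr ⟨hp, Finset.mem_univ _⟩
        have hqB : q ∈ B := Finset.mem_erase.mpr ⟨hq, Finset.mem_univ _⟩
        refine ⟨B, ⟨(hmemL _).mpr (Or.inl rfl), hpB, hqB⟩, ?_⟩
        rintro l ⟨hl, hpl, hql⟩
        rcases (hmemL l).mp hl with h | ⟨v, hv, h⟩
        · exact h
        · subst h
          exfalso
          rcases Finset.mem_insert.mp hpl with h | h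
          · exact hp h
          · rcases Finset.mem_insert.mp hql with h' | h'
            · exact hq h'
            · exact hpq (by rw [Finset.mem_singleton.mp h, Finset.mem_singleton.mp h'])
  · have key : ∑ v : Fin m, (L.filter (fun l => v ∈ l)).card
        = ∑ l ∈ L, l.card := by
      simp only [Finset.card_filter]
      rw [Finset.sum_comm]
      congr 1
      ext l
      simp [Finset.card_filter]
    rw [key, hL, Finset.sum_insert hBnotimg, Finset.sum_image, hBcard]
    · rw [Finset.sum_congr rfl hpaircard, Finset.sum_const, hBcard, smul_eq_mul]
      omega
    · intro a ha b hb heq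
      have : b ∈ ({x₀, a} : Finset (Fin m)) := (show ({x₀, a} : Finset (Fin m)) = {x₀, b} from heq) ▸ (by simp)
      rcases Finset.mem_insert.mp this with h | h
      · exact absurd h (Finset.mem_erase.mp hb).1
      · exact (Finset.mem_singleton.mp h).symm
end

section
/- Let m be a natural number with m ≥ 4, let L be a strict clique decomposition of Fin m containing a member l with l.card = m − 1, and let q be the unique point of Fin m with q ∉ l. Then L = insert l (l.image (fun x => ({q, x} : Finset (Fin m)))); that is, L consists exactly of l together with the 2-element sets {q, x} for x ∈ l. (Near-pencil rigidity: this is the case, used in the classification arguments of Propositions 5.1, 5.3, and 5.5, that a curve enclosing all but one of the interior boundary components forces all remaining curves to enclose exactly the omitted component and one other.) -/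
/-- Near-pencil rigidity: if a strict clique decomposition of `Fin m`
(with `m ≥ 4`) contains a member `l` of cardinality `m - 1`, and `q` is the
point outside `l`, then the decomposition consists exactly of `l` together
with the pairs `{q, x}` for `x ∈ l`. -/
theorem clique_decomposition_near_pencil_rigidity (m : ℕ) (hm : 4 ≤ m)
    (L : Finset (Finset (Fin m)))
    (hcard : ∀ l ∈ L, 2 ≤ l.card ∧ l.card ≤ m - 1)
    (hpair : ∀ p q : Fin m, p ≠ q → ∃! l : Finset (Fin m), l ∈ L ∧ p ∈ l ∧ q ∈ l)
    (l : Finset (Fin m)) (hl : l ∈ L) (hlcard : l.card = m - 1)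
    (q : Fin m) (hq : q ∉ l) :
    L = insert l (l.image (fun x => ({q, x} : Finset (Fin m)))) := by
  -- every point outside l is q
  have hql : ∀ x : Fin m, x ∉ l → x = q := by
    intro x hx
    by_contra hne
    have h1 : (insert x (insert q l)).card ≤ m := by
      have := Finset.card_le_univ (insert x (insert q l))
      simpa using this
    rw [Finset.card_insert_of_notMem (by simp [hx, hne]),
        Finset.card_insert_of_notMem hq, hlcard] at h1
    omega
  -- members ≠ l meet l in at most one point
  have hinter : ∀ l' ∈ L, l' ≠ l → ∀ p1 ∈ l' ∩ l, ∀ p2 ∈ l' ∩ l, p1 = p2 := by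
    intro l' hl' hne p1 hp1 p2 hp2
    by_contra hp
    simp only [Finset.mem_inter] at hp1 hp2
    obtain ⟨u, _, huniq⟩ := hpair p1 p2 hp
    have h1 := huniq l' ⟨hl', hp1.1, hp2.1⟩
    have h2 := huniq l ⟨hl, hp1.2, hp2.2⟩
    exact hne (h1.trans h2.symm)
  -- every member ≠ l is {q, x} for some x ∈ l
  have key : ∀ l' ∈ L, l' ≠ l → ∃ x ∈ l, l' = {q, x} := by
    intro l' hl' hne
    have h2 : 1 < l'.card := (hcard l' hl').1
    have hqin : q ∈ l' := by
      by_contra hqn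
      have hsub : l' ⊆ l := by
        intro y hy
        by_contra hyl
        exact hqn (hql y hyl ▸ hy)
      obtain ⟨a, ha, hab⟩ := Finset.exists_mem_ne h2 q
      obtain ⟨b, hb, hba⟩ := Finset.exists_mem_ne h2 a
      exact hba (hinter l' hl' hne b (Finset.mem_inter.mpr ⟨hb, hsub hb⟩)
        a (Finset.mem_inter.mpr ⟨ha, hsub ha⟩))
    obtain ⟨x, hxl', hxq⟩ := Finset.exists_mem_ne h2 q
    have hxl : x ∈ l := by
      by_contra h
      exact hxq (hql x h)
    refine ⟨x, hxl, ?_⟩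
    ext y
    simp only [Finset.mem_insert, Finset.mem_singleton]
    constructor
    · intro hy
      by_cases hyl : y ∈ l
      · exact Or.inr (hinter l' hl' hne y (Finset.mem_inter.mpr ⟨hy, hyl⟩)
          x (Finset.mem_inter.mpr ⟨hxl', hxl⟩))
      · exact Or.inl (hql y hyl)
    · rintro (rfl | rfl)
      exacts [hqin, hxl']
  -- every pair {q, x} with x ∈ l is a member
  have pairmem : ∀ x ∈ l, ({q, x} : Finset (Fin m)) ∈ L := by
    intro x hx
    have hqx : q ≠ x := fun h => hq (h ▸ hx)
    obtain ⟨u, ⟨huL, hqu, hxu⟩, -⟩ := hpair q x hqx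
    have hune : u ≠ l := fun h => hq (h ▸ hqu)
    obtain ⟨y, hy, rfl⟩ := key u huL hune
    rcases Finset.mem_insert.mp hxu with h | h
    · exact absurd h.symm hqx
    · rw [Finset.mem_singleton] at h
      subst h
      exact huL
  ext a
  simp only [Finset.mem_insert, Finset.mem_image]
  constructor
  · intro ha
    by_cases h : a = l
    · exact Or.inl h
    · obtain ⟨x, hx, hax⟩ := key a ha h
      exact Or.inr ⟨x, hx, hax.symm⟩
  · rintro (rfl | ⟨x, hx, rfl⟩)
    exacts [hl, pairmem x hx]
end

section
/- Every strict clique decomposition L of Fin 4 is either the family of all 2-element subsets of Fin 4, or there exist pairwise distinct points a, b, c, d : Fin 4 with L = {{a,b,c},{a,d},{b,d},{c,d}} (equivalently, some permutation σ of Fin 4 carries L, by taking the image of each member under σ, to {{0,1,2},{0,3},{1,3},{2,3}}). (This is the combinatorial core of Proposition 5.1: up to symmetry, the two listed relations are the only relations of the form T_{b_1}^{a_1}⋯T_{b_4}^{a_4}T_{b_5} = T_{α_1}⋯T_{α_m} on the mapping class monoid of the 5-holed sphere.) -/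
/-- Combinatorial core of Proposition 5.1: every strict clique decomposition
of `Fin 4` is either the family of all 2-element subsets, or of the form
`{{a,b,c},{a,d},{b,d},{c,d}}` for pairwise distinct `a, b, c, d`. -/
theorem clique_decomposition_fin_four_classification
    (L : Finset (Finset (Fin 4)))
    (hcard : ∀ l ∈ L, 2 ≤ l.card ∧ l.card ≤ 3)
    (hpair : ∀ p q : Fin 4, p ≠ q → ∃! l : Finset (Fin 4), l ∈ L ∧ p ∈ l ∧ q ∈ l) :
    L = (Finset.univ : Finset (Fin 4)).powersetCard 2 ∨
    ∃ a b c d : Fin 4, a ≠ b ∧ a ≠ c ∧ a ≠ d ∧ b ≠ c ∧ b ≠ d ∧ c ≠ d ∧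
      L = ({{a, b, c}, {a, d}, {b, d}, {c, d}} : Finset (Finset (Fin 4))) := by
  by_cases h3 : ∃ l ∈ L, l.card = 3
  · right
    obtain ⟨l, hlL, hl3⟩ := h3
    obtain ⟨a, b, c, hab, hac, hbc, rfl⟩ := Finset.card_eq_three.mp hl3
    -- the fourth point
    have hcompl : (({a, b, c} : Finset (Fin 4))ᶜ).card = 1 := by
      rw [Finset.card_compl, hl3]; rfl
    obtain ⟨d, hd⟩ := Finset.card_eq_one.mp hcompl
    have hdmem : d ∉ ({a, b, c} : Finset (Fin 4)) := by
      have : d ∈ ({a, b, c} : Finset (Fin 4))ᶜ := by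
        rw [hd]; exact Finset.mem_singleton_self d
      simpa using this
    have hall : ∀ p : Fin 4, p ∉ ({a, b, c} : Finset (Fin 4)) → p = d := by
      intro p hp
      have : p ∈ ({a, b, c} : Finset (Fin 4))ᶜ := Finset.mem_compl.mpr hp
      rw [hd] at this
      simpa using this
    have had : a ≠ d := fun h => hdmem (h ▸ by simp)
    have hbd : b ≠ d := fun h => hdmem (h ▸ by simp)
    have hcd : c ≠ d := fun h => hdmem (h ▸ by simp)
    -- key claim: for x ∈ {a,b,c}, the set {x,d} is in L
    have key : ∀ x ∈ ({a, b, c} : Finset (Fin 4)), ({x, d} : Finset (Fin 4)) ∈ L := by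
      intro x hx
      have hxd : x ≠ d := fun h => hdmem (h ▸ hx)
      obtain ⟨m, ⟨hmL, hxm, hdm⟩, huniq⟩ := hpair x d hxd
      have hmne : m ≠ ({a, b, c} : Finset (Fin 4)) := fun h => hdmem (h ▸ hdm)
      -- m ∩ {a,b,c} ⊆ {x}
      have hsub : m ⊆ ({x, d} : Finset (Fin 4)) := by
        intro y hy
        by_cases hy' : y ∈ ({a, b, c} : Finset (Fin 4))
        · by_cases hyx : y = x
          · simp [hyx]
          · exfalso
            obtain ⟨w, hw, hwuniq⟩ := hpair x y (fun h => hyx h.symm)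
            have h1 : m = w := hwuniq m ⟨hmL, hxm, hy⟩
            have h2 : ({a, b, c} : Finset (Fin 4)) = w := hwuniq _ ⟨hlL, hx, hy'⟩
            exact hmne (h1.trans h2.symm)
        · have := hall y hy'
          simp [this]
      have : m = ({x, d} : Finset (Fin 4)) := by
        apply Finset.Subset.antisymm hsub
        intro y hy
        rcases Finset.mem_insert.mp hy with h | h
        · exact h ▸ hxm
        · exact (Finset.mem_singleton.mp h) ▸ hdm
      exact this ▸ hmL
    have haL : ({a, d} : Finset (Fin 4)) ∈ L := key a (by simp)
    have hbL : ({b, d} : Finset (Fin 4)) ∈ L := key b (by simp)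
    have hcL : ({c, d} : Finset (Fin 4)) ∈ L := key c (by simp)
    refine ⟨a, b, c, d, hab, hac, had, hbc, hbd, hcd, ?_⟩
    apply Finset.Subset.antisymm
    · intro m hmL
      have h2 : 2 ≤ m.card := (hcard m hmL).1
      obtain ⟨p, hpm, q, hqm, hpq⟩ := Finset.one_lt_card.mp h2
      obtain ⟨w, hw, hwuniq⟩ := hpair p q hpq
      have hmw : m = w := hwuniq m ⟨hmL, hpm, hqm⟩
      by_cases hp : p ∈ ({a, b, c} : Finset (Fin 4))
      · by_cases hq : q ∈ ({a, b, c} : Finset (Fin 4))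
        · have h2' : ({a, b, c} : Finset (Fin 4)) = w := hwuniq _ ⟨hlL, hp, hq⟩
          have : m = ({a, b, c} : Finset (Fin 4)) := hmw.trans h2'.symm
          simp [this]
        · have hqd : q = d := hall q hq
          have h2' : ({p, d} : Finset (Fin 4)) = w :=
            hwuniq _ ⟨key p hp, by simp, by simp [← hqd, hqm]⟩
          have hm : m = ({p, d} : Finset (Fin 4)) := hmw.trans h2'.symm
          rcases Finset.mem_insert.mp hp with h | h
          · simp [hm, h]
          rcases Finset.mem_insert.mp h with h | h
          · simp [hm, h]
          · simp [hm, Finset.mem_singleton.mp h]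
      · have hpd : p = d := hall p hp
        have hq : q ∈ ({a, b, c} : Finset (Fin 4)) := by
          by_contra hq
          exact hpq (hpd.trans (hall q hq).symm)
        have h2' : ({q, d} : Finset (Fin 4)) = w :=
          hwuniq _ ⟨key q hq, by simp [← hpd, hpm], by simp⟩
        have hm : m = ({q, d} : Finset (Fin 4)) := hmw.trans h2'.symm
        rcases Finset.mem_insert.mp hq with h | h
        · simp [hm, h]
        rcases Finset.mem_insert.mp h with h | h
        · simp [hm, h]
        · simp [hm, Finset.mem_singleton.mp h]
    · intro m hm
      simp only [Finset.mem_insert, Finset.mem_singleton] at hm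
      rcases hm with rfl | rfl | rfl | rfl
      · exact hlL
      · exact haL
      · exact hbL
      · exact hcL
  · left
    push_neg at h3
    ext s
    simp only [Finset.mem_powersetCard, Finset.subset_univ, true_and]
    constructor
    · intro hs
      have h1 := (hcard s hs).1
      have h2 := (hcard s hs).2
      have h3' := h3 s hs
      omega
    · intro hs
      obtain ⟨p, q, hpq, rfl⟩ := Finset.card_eq_two.mp hs
      obtain ⟨w, ⟨hwL, hpw, hqw⟩, _⟩ := hpair p q hpq
      have hw2 : w.card = 2 := by
        have h1 := (hcard w hwL).1
        have h2 := (hcard w hwL).2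
        have h3' := h3 w hwL
        omega
      have hsub : ({p, q} : Finset (Fin 4)) ⊆ w := by
        intro y hy
        rcases Finset.mem_insert.mp hy with h | h
        · exact h ▸ hpw
        · exact (Finset.mem_singleton.mp h) ▸ hqw
      have : ({p, q} : Finset (Fin 4)) = w :=
        Finset.eq_of_subset_of_card_le hsub (by rw [hw2, hs])
      exact this ▸ hwL
end
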